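/- arXiv:1602.06031 — 2 statements merged into one kernel-verified Lean document; each statement's English description precedes it below -/
import Mathlib

section
/- Let n ≥ 3, k an integer with 1 < k < n/2, and p > nk/(n-2k). Let u be a regular solution of the initial value problem -(1/k)·C(n-1,k-1)·(r^{n-k}|u'|^{k-1}u')' = r^{n-1}u^p, u > 0, u'(0) = 0, u(0) = ρ > 0. If u(r) = O(r^{-2k/(p-k)-ε}) as r → ∞ for some ε ∈ (0, (n-2k)/k − 2k/(p-k)), then u(r) = O(r^{(2k-n)/k}) as r → ∞. -/
open MeasureTheory Real Set Filter Asymptotics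

noncomputable section

namespace KHessianPaper

/-- The binomial coefficient `C(n-1, k-1)` as a real number. -/
def binomC (n k : ℕ) : ℝ := ((n - 1).choose (k - 1) : ℝ)

/-- The flux `w(r) = r^{n-k} |u'(r)|^{k-1} u'(r)`. -/
def flux (n k : ℕ) (u : ℝ → ℝ) (r : ℝ) : ℝ :=
  r ^ (n - k) * |deriv u r| ^ (k - 1) * deriv u r

/-- `u` is a regular solution of the radial `k`-Hessian initial value problem
`-(1/k) C(n-1,k-1) (r^{n-k} |u'|^{k-1} u')' = r^{n-1} u^p`, `u > 0`, `u'(0) = 0`, `u(0) = ρ`. -/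
structure IsRegularSolution (n k : ℕ) (p ρ : ℝ) (u : ℝ → ℝ) : Prop where
  contDiffOn : ContDiffOn ℝ 1 u (Ici 0)
  deriv_zero : derivWithin u (Ici 0) 0 = 0
  init : u 0 = ρ
  pos : ∀ r : ℝ, 0 ≤ r → 0 < u r
  eqn : ∀ r : ℝ, 0 < r →
    HasDerivAt (flux n k u) (-((k : ℝ) / binomC n k) * r ^ (n - 1) * u r ^ p) r
  radial_smooth : ContDiff ℝ 2 (fun x : EuclideanSpace ℝ (Fin n) => -u ‖x‖)

/-- `φ : [0,∞) → ℝ` is the radial profile of a smooth compactly supported function on `ℝⁿ`. -/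
def MemWStar (n : ℕ) (φ : ℝ → ℝ) : Prop :=
  ∃ Φ : EuclideanSpace ℝ (Fin n) → ℝ,
    ContDiff ℝ (⊤ : ℕ∞) Φ ∧ HasCompactSupport Φ ∧ ∀ x, Φ x = φ ‖x‖

/-- The weak form of the equation tested against `φ`. -/
def WeakEqn (n k : ℕ) (p : ℝ) (u φ : ℝ → ℝ) : Prop :=
  ∫ r in Ioi (0 : ℝ),
      ((1 / (k : ℝ)) * binomC n k * r ^ (n - k) * |deriv u r| ^ (k - 1) * deriv u r
          * deriv φ r
        - r ^ (n - 1) * u r ^ p * φ r) = 0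

/-- The second-variation quadratic form `Q_u(φ)`. -/
def Qform (n k : ℕ) (p : ℝ) (u φ : ℝ → ℝ) : ℝ :=
  binomC n k * ∫ r in Ioi (0 : ℝ), r ^ (n - k) * |deriv u r| ^ (k - 1) * (deriv φ r) ^ 2
    - p * ∫ r in Ioi (0 : ℝ), r ^ (n - 1) * u r ^ (p - 1) * (φ r) ^ 2

/-- `u` is a positive stable solution of the radial `k`-Hessian equation. -/
def IsStableSolution (n k : ℕ) (p : ℝ) (u : ℝ → ℝ) : Prop :=
  (∀ r : ℝ, 0 < r → 0 < u r) ∧ ContDiffOn ℝ 1 u (Ioi 0) ∧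
  (∀ φ, MemWStar n φ → WeakEqn n k p u φ) ∧
  (∀ φ, MemWStar n φ → 0 ≤ Qform n k p u φ)

/-- `u` is a positive stable solution on `(R,∞)` of the radial `k`-Hessian equation. -/
def IsStableSolutionOn (n k : ℕ) (p : ℝ) (R : ℝ) (u : ℝ → ℝ) : Prop :=
  (∀ r : ℝ, 0 < r → 0 < u r) ∧ ContDiffOn ℝ 1 u (Ioi 0) ∧
  (∀ φ, MemWStar n φ → WeakEqn n k p u φ) ∧
  (∀ φ : ℝ → ℝ, ContDiff ℝ (⊤ : ℕ∞) φ → HasCompactSupport φ → tsupport φ ⊆ Ioi R →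
    0 ≤ Qform n k p u φ)

/-- The constant `A` in the singular solution `u_s(r) = A r^{-2k/(p-k)}`. -/
def Aconst (n k : ℕ) (p : ℝ) : ℝ :=
  ((1 / (k : ℝ)) * binomC n k) ^ (1 / (p - k))
    * (2 * (k : ℝ) / (p - (k : ℝ))) ^ ((k : ℝ) / (p - k))
    * ((n : ℝ) - 2 * p * k / (p - k)) ^ (1 / (p - k))

/-- The singular solution `u_s(r) = A r^{-2k/(p-k)}`. -/
def uSing (n k : ℕ) (p : ℝ) (r : ℝ) : ℝ := Aconst n k p * r ^ (-(2 * (k : ℝ) / (p - k)))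

/-- The Joseph–Lundgren exponent (finite form, relevant when `n > 2k+8`). -/
def pJL (n k : ℕ) : ℝ :=
  ((k : ℝ) * ((n : ℝ) ^ 2 - 2 * ((k : ℝ) + 3) * (n : ℝ) + 4 * (k : ℝ))
      + 4 * (k : ℝ) * Real.sqrt (2 * ((k : ℝ) + 1) * (n : ℝ) - 4 * (k : ℝ)))
    / (((n : ℝ) - 2 * (k : ℝ)) * ((n : ℝ) - 2 * (k : ℝ) - 8))

/-- The exponent `p* = k(n+2k)/(n-2k)`. -/
def pStar (n k : ℕ) : ℝ := (k : ℝ) * ((n : ℝ) + 2 * (k : ℝ)) / ((n : ℝ) - 2 * (k : ℝ))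

/-
Integrating the equation from the regular centre gives
`r^{n-k} |u'|^k = (k / C(n-1,k-1)) ∫₀^r s^{n-1} u^p`. A bound `u = O(r^a)` bounds the integral
by `O(r^q)` for any `q > 0` with `q ≥ n + pa`, or by `O(1)` once `pa < -n`; this bounds `|u'|`,
and integrating `u'` from `r` to `∞`, where `u → 0`, bounds `u` by `O(r^{(q+2k-n)/k})` as long
as `q < n - 2k`.
While `pa ≥ -n` one round lowers the exponent `a` by at least `(p-k)ε/(2k)`, so after finitely
many rounds `pa < -n`, and the bounded integral then gives exactly `u = O(r^{(2k-n)/k})`.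
-/

open Topology

lemma isBigO_rpow_atTop_iff {f : ℝ → ℝ} (hf : ∀ᶠ r in atTop, 0 ≤ f r) {a : ℝ} :
    (f =O[atTop] fun r => r ^ a) ↔ ∃ C, ∀ᶠ r in atTop, f r ≤ C * r ^ a := by
  rw [isBigO_iff]
  refine exists_congr fun C => eventually_congr ?_
  filter_upwards [hf, eventually_gt_atTop 0] with r hfr hr
  rw [Real.norm_of_nonneg hfr, Real.norm_of_nonneg (Real.rpow_nonneg hr.le a)]

lemma le_rpow_of_tendsto_zero_of_neg_rpow_le_deriv {f f' : ℝ → ℝ} {R M β : ℝ} (hR : 0 < R)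
    (hβ : β < -1) (hf : ∀ r, R ≤ r → HasDerivAt f (f' r) r)
    (hf' : ∀ r, R ≤ r → -(M * r ^ β) ≤ f' r) (hlim : Tendsto f atTop (𝓝 0))
    {r : ℝ} (hr : R ≤ r) : f r ≤ M / (-(β + 1)) * r ^ (β + 1) := by
  set G : ℝ → ℝ := fun s => f s - M / (-(β + 1)) * s ^ (β + 1)
  have hG : ∀ s, R ≤ s → HasDerivAt G (f' s + M * s ^ β) s := by
    intro s hs
    refine ((hf s hs).sub ((Real.hasDerivAt_rpow_const
      (Or.inl (hR.trans_le hs).ne')).const_mul (M / (-(β + 1))))).congr_deriv ?_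
    have : β + 1 ≠ 0 := by linarith
    rw [add_sub_cancel_right]
    field_simp
    ring
  have hmono : MonotoneOn G (Ici R) := by
    refine monotoneOn_of_hasDerivWithinAt_nonneg (convex_Ici R)
      (fun s hs => (hG s hs).continuousAt.continuousWithinAt)
      (fun s hs => (hG s (interior_subset hs)).hasDerivWithinAt) fun s hs => ?_
    linarith [hf' s (interior_subset hs)]
  have hGlim : Tendsto G atTop (𝓝 0) := by
    have h := tendsto_rpow_neg_atTop (y := -(β + 1)) (by linarith)
    rw [neg_neg] at h
    simpa [G] using hlim.sub (h.const_mul (M / (-(β + 1))))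
  have hG0 : G r ≤ 0 := ge_of_tendsto hGlim <|
    (eventually_ge_atTop r).mono fun s hs => hmono hr (hr.trans hs) hs
  simp only [G] at hG0
  linarith

lemma exists_mem_lt_of_forall_exists_le_sub {S : Set ℝ} {a b δ : ℝ} (hδ : 0 < δ) (ha : a ∈ S)
    (hstep : ∀ x ∈ S, x ≤ a → b ≤ x → ∃ y ∈ S, y ≤ x - δ) : ∃ x ∈ S, x < b := by
  have key : ∀ m : ℕ, ∃ x ∈ S, x ≤ a ∧ (x < b ∨ x ≤ a - m * δ) := by
    intro m
    induction m with
    | zero => exact ⟨a, ha, le_rfl, Or.inr (by simp)⟩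
    | succ m ih =>
      obtain ⟨x, hxS, hxa, hx⟩ := ih
      by_cases hxb : x < b
      · exact ⟨x, hxS, hxa, Or.inl hxb⟩
      obtain ⟨y, hyS, hyx⟩ := hstep x hxS hxa (not_lt.1 hxb)
      refine ⟨y, hyS, by linarith, Or.inr ?_⟩
      push_cast
      linarith [hx.resolve_left hxb]
  obtain ⟨m, hm⟩ := exists_nat_gt ((a - b) / δ)
  obtain ⟨x, hxS, -, hx⟩ := key m
  refine ⟨x, hxS, hx.elim id fun hx => ?_⟩
  rw [div_lt_iff₀ hδ] at hm
  linarith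

def sourceMass (n : ℕ) (p : ℝ) (u : ℝ → ℝ) (r : ℝ) : ℝ :=
  ∫ s in (0 : ℝ)..r, s ^ (n - 1) * u s ^ p

namespace IsRegularSolution

variable {n k : ℕ} {p ρ : ℝ} {u : ℝ → ℝ}

lemma hasDerivAt (hu : IsRegularSolution n k p ρ u) {r : ℝ} (hr : 0 < r) :
    HasDerivAt u (deriv u r) r :=
  ((hu.contDiffOn.differentiableOn one_ne_zero).differentiableAt (Ici_mem_nhds hr)).hasDerivAt

lemma eventually_nonneg (hu : IsRegularSolution n k p ρ u) : ∀ᶠ r in atTop, 0 ≤ u r :=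
  eventually_atTop.2 ⟨0, fun r hr => (hu.pos r hr).le⟩

lemma intervalIntegrable_source (hu : IsRegularSolution n k p ρ u) {a b : ℝ} (ha : 0 ≤ a)
    (hb : 0 ≤ b) : IntervalIntegrable (fun s : ℝ => s ^ (n - 1) * u s ^ p) volume a b := by
  refine ContinuousOn.intervalIntegrable (((continuous_pow _).continuousOn.mul
    (hu.contDiffOn.continuousOn.rpow_const fun s hs => Or.inl (hu.pos s hs).ne')).mono ?_)
  exact fun s hs => (le_min ha hb).trans hs.1

lemma sourceMass_nonneg (hu : IsRegularSolution n k p ρ u) {r : ℝ} (hr : 0 ≤ r) :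
    0 ≤ sourceMass n p u r :=
  intervalIntegral.integral_nonneg hr fun s hs =>
    mul_nonneg (pow_nonneg hs.1 _) (Real.rpow_nonneg (hu.pos s hs.1).le _)

lemma eventually_sourceMass_nonneg (hu : IsRegularSolution n k p ρ u) :
    ∀ᶠ r in atTop, 0 ≤ sourceMass n p u r :=
  eventually_atTop.2 ⟨0, fun _ hr => hu.sourceMass_nonneg hr⟩

lemma continuousOn_flux (hu : IsRegularSolution n k p ρ u) (hkn : k < n) :
    ContinuousOn (flux n k u) (Ici 0) := by
  -- On `(0, ∞)` `deriv u` is the one-sided derivative; at `0` the factor `r ^ (n - k)` hides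
  -- the junk value of `deriv u 0`.
  set v := derivWithin u (Ici 0)
  have hv : ContinuousOn v (Ici 0) :=
    hu.contDiffOn.continuousOn_derivWithin (uniqueDiffOn_Ici 0) le_rfl
  refine ContinuousOn.congr (f := fun r => r ^ (n - k) * |v r| ^ (k - 1) * v r)
    (((continuous_pow _).continuousOn.mul (hv.abs.pow _)).mul hv) fun r hr => ?_
  rcases (mem_Ici.1 hr).eq_or_lt with rfl | hr
  · simp [flux, zero_pow (Nat.sub_ne_zero_of_lt hkn)]
  · simp only [flux, v, derivWithin_of_mem_nhds (Ici_mem_nhds hr)]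

lemma flux_eq (hu : IsRegularSolution n k p ρ u) (hkn : k < n) {r : ℝ} (hr : 0 ≤ r) :
    flux n k u r = -(k / binomC n k) * sourceMass n p u r := by
  have hftc := intervalIntegral.integral_eq_sub_of_hasDerivAt_of_le hr
    ((hu.continuousOn_flux hkn).mono Icc_subset_Ici_self) (fun s hs => hu.eqn s hs.1)
    (by simpa only [mul_assoc] using
      (hu.intervalIntegrable_source le_rfl hr).const_mul (-(k / binomC n k)))
  have hflux0 : flux n k u 0 = 0 := by simp [flux, zero_pow (Nat.sub_ne_zero_of_lt hkn)]
  simp only [mul_assoc, intervalIntegral.integral_const_mul, hflux0, sub_zero] at hftc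
  exact hftc.symm

lemma pow_mul_abs_deriv_pow (hu : IsRegularSolution n k p ρ u) (hk : 0 < k) (hkn : k < n)
    {r : ℝ} (hr : 0 < r) :
    r ^ (n - k) * |deriv u r| ^ k = k / binomC n k * sourceMass n p u r := by
  have hc : 0 ≤ (k : ℝ) / binomC n k := by unfold binomC; positivity
  have h := congrArg abs (hu.flux_eq hkn hr.le)
  rwa [flux, abs_mul, abs_mul, abs_pow, abs_pow, abs_abs, abs_of_pos hr, mul_assoc,
    pow_sub_one_mul hk.ne', abs_mul, abs_neg, abs_of_nonneg hc,
    abs_of_nonneg (hu.sourceMass_nonneg hr.le)] at h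

lemma abs_deriv_le (hu : IsRegularSolution n k p ρ u) (hk : 0 < k) (hkn : k < n)
    {K q r : ℝ} (hr : 0 < r) (hI : sourceMass n p u r ≤ K * r ^ q) :
    |deriv u r| ≤ (k / binomC n k * K) ^ (k⁻¹ : ℝ) * r ^ ((q - (n - k)) / k) := by
  have hc : 0 ≤ (k : ℝ) / binomC n k := by unfold binomC; positivity
  have hK : 0 ≤ K := nonneg_of_mul_nonneg_left ((hu.sourceMass_nonneg hr.le).trans hI)
    (Real.rpow_pos_of_pos hr q)
  have hrnk : (r ^ (n - k) : ℝ) = r ^ ((n : ℝ) - k) := by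
    rw [← Real.rpow_natCast, Nat.cast_sub hkn.le]
  have hk' : (k : ℝ) ≠ 0 := by exact_mod_cast hk.ne'
  rw [← pow_le_pow_iff_left₀ (abs_nonneg _) (by positivity) hk.ne', mul_pow,
    Real.rpow_inv_natCast_pow (by positivity) hk.ne', ← Real.rpow_mul_natCast hr.le,
    div_mul_cancel₀ _ hk', Real.rpow_sub hr, ← mul_div_assoc, le_div_iff₀ (by positivity),
    mul_comm, ← hrnk, hu.pow_mul_abs_deriv_pow hk hkn hr, mul_assoc]
  exact mul_le_mul_of_nonneg_left hI hc

lemma isBigO_rpow_of_sourceMass_isBigO (hu : IsRegularSolution n k p ρ u) (hk : 0 < k)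
    (hkn : k < n) (hlim : Tendsto u atTop (𝓝 0)) {q : ℝ}
    (hI : sourceMass n p u =O[atTop] fun r => r ^ q) (hq : q < n - 2 * k) :
    u =O[atTop] fun r => r ^ ((q + 2 * k - n) / k) := by
  obtain ⟨K, hK⟩ := (isBigO_rpow_atTop_iff hu.eventually_sourceMass_nonneg).1 hI
  obtain ⟨R, hR⟩ := eventually_atTop.1 (hK.and (eventually_gt_atTop 0))
  set β : ℝ := (q - (n - k)) / k
  have hk' : (0 : ℝ) < k := by exact_mod_cast hk
  have hβ : β < -1 := by rw [div_lt_iff₀ hk']; linarith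
  have hβ1 : β + 1 = (q + 2 * k - n) / k := by simp only [β]; field_simp; ring
  rw [isBigO_rpow_atTop_iff hu.eventually_nonneg, ← hβ1]
  set M : ℝ := (k / binomC n k * K) ^ (k⁻¹ : ℝ)
  have hderiv : ∀ s, R ≤ s → -(M * s ^ β) ≤ deriv u s := fun s hs =>
    neg_le_of_abs_le (hu.abs_deriv_le hk hkn (hR s hs).2 (hR s hs).1)
  exact ⟨M / -(β + 1), eventually_atTop.2 ⟨R, fun r hr =>
    le_rpow_of_tendsto_zero_of_neg_rpow_le_deriv (hR R le_rfl).2 hβ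
      (fun s hs => hu.hasDerivAt (hR s hs).2) hderiv hlim hr⟩⟩

lemma source_le_of_le_rpow (hu : IsRegularSolution n k p ρ u) (hn : 1 ≤ n) (hp : 0 ≤ p)
    {s C a : ℝ} (hs : 0 < s) (hC : 0 ≤ C) (hB : u s ≤ C * s ^ a) :
    s ^ (n - 1) * u s ^ p ≤ C ^ p * s ^ ((n : ℝ) - 1 + p * a) := by
  calc s ^ (n - 1) * u s ^ p ≤ s ^ (n - 1) * (C * s ^ a) ^ p := by
        gcongr
        exact (hu.pos s hs.le).le
    _ = C ^ p * s ^ ((n : ℝ) - 1 + p * a) := by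
        rw [Real.mul_rpow hC (Real.rpow_nonneg hs.le _), ← Real.rpow_mul hs.le,
          Real.rpow_add hs, ← Real.rpow_natCast, Nat.cast_sub hn, Nat.cast_one, mul_comm a]
        ring

lemma sourceMass_le_add_integral (hu : IsRegularSolution n k p ρ u) (hn : 1 ≤ n) (hp : 0 ≤ p)
    {R C a : ℝ} (hR : 0 < R) (hC : 0 ≤ C) (hB : ∀ r, R ≤ r → u r ≤ C * r ^ a) {r : ℝ}
    (hr : R ≤ r) :
    sourceMass n p u r ≤
      sourceMass n p u R + C ^ p * ∫ s in R..r, s ^ ((n : ℝ) - 1 + p * a) := by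
  have h0 : (0 : ℝ) ∉ uIcc R r := by rw [uIcc_of_le hr]; exact fun h => hR.not_ge h.1
  rw [sourceMass, sourceMass, ← intervalIntegral.integral_add_adjacent_intervals
    (hu.intervalIntegrable_source le_rfl hR.le) (hu.intervalIntegrable_source hR.le
    (hR.le.trans hr)), ← intervalIntegral.integral_const_mul]
  gcongr
  refine intervalIntegral.integral_mono_on hr
    (hu.intervalIntegrable_source hR.le (hR.le.trans hr))
    ((intervalIntegral.intervalIntegrable_rpow (Or.inr h0)).const_mul _) fun s hs => ?_
  exact hu.source_le_of_le_rpow hn hp (hR.trans_le hs.1) hC (hB s hs.1)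

lemma exists_forall_ge_le_rpow (hu : IsRegularSolution n k p ρ u) {a : ℝ}
    (hu_le : u =O[atTop] fun r => r ^ a) :
    ∃ C R, 0 ≤ C ∧ 1 ≤ R ∧ ∀ r, R ≤ r → u r ≤ C * r ^ a := by
  obtain ⟨C, hC⟩ := (isBigO_rpow_atTop_iff hu.eventually_nonneg).1 hu_le
  obtain ⟨R, hR⟩ := eventually_atTop.1 (hC.and (eventually_ge_atTop 1))
  have hR0 : 0 < R := one_pos.trans_le (hR R le_rfl).2
  exact ⟨C, R, nonneg_of_mul_nonneg_left ((hu.pos R hR0.le).le.trans (hR R le_rfl).1)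
    (Real.rpow_pos_of_pos hR0 a), (hR R le_rfl).2, fun r hr => (hR r hr).1⟩

lemma sourceMass_isBigO_rpow (hu : IsRegularSolution n k p ρ u) (hn : 1 ≤ n) (hp : 0 ≤ p)
    {a q : ℝ} (hu_le : u =O[atTop] fun r => r ^ a) (hq : 0 < q) (hqa : n + p * a ≤ q) :
    sourceMass n p u =O[atTop] fun r => r ^ q := by
  obtain ⟨C, R, hC, hR, hB⟩ := hu.exists_forall_ge_le_rpow hu_le
  have hR0 : 0 < R := one_pos.trans_le hR
  rw [isBigO_rpow_atTop_iff hu.eventually_sourceMass_nonneg]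
  refine ⟨sourceMass n p u R + C ^ p / q, eventually_atTop.2 ⟨R, fun r hr => ?_⟩⟩
  have h0 : (0 : ℝ) ∉ uIcc R r := by rw [uIcc_of_le hr]; exact fun h => hR0.not_ge h.1
  have hint : ∫ s in R..r, s ^ ((n : ℝ) - 1 + p * a) ≤ r ^ q / q :=
    calc ∫ s in R..r, s ^ ((n : ℝ) - 1 + p * a) ≤ ∫ s in R..r, s ^ (q - 1) :=
          intervalIntegral.integral_mono_on hr (intervalIntegral.intervalIntegrable_rpow
            (Or.inr h0)) (intervalIntegral.intervalIntegrable_rpow (Or.inr h0)) fun s hs =>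
            Real.rpow_le_rpow_of_exponent_le (hR.trans hs.1) (by linarith)
      _ = (r ^ q - R ^ q) / q := by
          rw [integral_rpow (Or.inl (by linarith)), sub_add_cancel]
      _ ≤ r ^ q / q := by gcongr; exact sub_le_self _ (Real.rpow_nonneg hR0.le q)
  have hrq : 1 ≤ r ^ q := Real.one_le_rpow (hR.trans hr) hq.le
  calc sourceMass n p u r ≤ sourceMass n p u R + C ^ p * (r ^ q / q) :=
        (hu.sourceMass_le_add_integral hn hp hR0 hC hB hr).trans (by gcongr)
    _ ≤ (sourceMass n p u R + C ^ p / q) * r ^ q := by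
        rw [add_mul, mul_div_assoc', div_mul_eq_mul_div]
        gcongr
        exact le_mul_of_one_le_right (hu.sourceMass_nonneg hR0.le) hrq

lemma sourceMass_isBigO_one (hu : IsRegularSolution n k p ρ u) (hn : 1 ≤ n) (hp : 0 ≤ p)
    {a : ℝ} (hu_le : u =O[atTop] fun r => r ^ a) (ha : p * a < -n) :
    sourceMass n p u =O[atTop] fun _ => (1 : ℝ) := by
  obtain ⟨C, R, hC, hR, hB⟩ := hu.exists_forall_ge_le_rpow hu_le
  have hR0 : 0 < R := one_pos.trans_le hR
  set e : ℝ := n - 1 + p * a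
  refine IsBigO.of_bound (sourceMass n p u R + C ^ p * (R ^ (e + 1) / -(e + 1)))
    (eventually_atTop.2 ⟨R, fun r hr => ?_⟩)
  rw [norm_one, mul_one, Real.norm_of_nonneg (hu.sourceMass_nonneg (hR0.le.trans hr))]
  have h0 : (0 : ℝ) ∉ uIcc R r := by rw [uIcc_of_le hr]; exact fun h => hR0.not_ge h.1
  have he : e + 1 < 0 := by simp only [e]; linarith
  have hint : ∫ s in R..r, s ^ e ≤ R ^ (e + 1) / -(e + 1) := by
    rw [integral_rpow (Or.inr ⟨by linarith, h0⟩), ← neg_div_neg_eq, neg_sub]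
    exact div_le_div_of_nonneg_right (sub_le_self _ (Real.rpow_nonneg (hR0.le.trans hr) _))
      (by linarith)
  refine (hu.sourceMass_le_add_integral hn hp hR0 hC hB hr).trans ?_
  gcongr

lemma isBigO_fundamental_of_mul_lt_neg (hu : IsRegularSolution n k p ρ u) (hk : 0 < k)
    (hkn : 2 * k < n) (hp : 0 ≤ p) (hlim : Tendsto u atTop (𝓝 0)) {a : ℝ}
    (ha : u =O[atTop] fun r => r ^ a) (hpa : p * a < -n) : u =O[atTop] fun r => r ^ ((2 * (k : ℝ) - n) / k) := by
  have hkn' : (2 * k : ℝ) < n := by exact_mod_cast hkn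
  have h := hu.isBigO_rpow_of_sourceMass_isBigO hk (by omega) hlim (q := 0)
    (by simpa only [Real.rpow_zero] using hu.sourceMass_isBigO_one (by omega) hp ha hpa)
    (by linarith)
  rwa [zero_add] at h

lemma exists_isBigO_rpow_le_sub (hu : IsRegularSolution n k p ρ u) (hk : 0 < k)
    (hkn : 2 * k < n) (hpk : k < p) {ε : ℝ} (hε : 0 < ε) (hlim : Tendsto u atTop (𝓝 0))
    {a : ℝ} (ha : u =O[atTop] fun r => r ^ a) (ha₀ : a ≤ -(2 * k / (p - k)) - ε)
    (hpa : -n ≤ p * a) :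
    ∃ b, (u =O[atTop] fun r => r ^ b) ∧ b ≤ a - (p - k) * ε / (2 * k) := by
  have hk' : (0 : ℝ) < k := by exact_mod_cast hk
  have hpk' : (0 : ℝ) < p - k := sub_pos.2 hpk
  have hpka : (p - k) * a ≤ -(2 * k) - (p - k) * ε := by
    have := mul_le_mul_of_nonneg_left ha₀ hpk'.le
    rwa [mul_sub, mul_neg, mul_div_cancel₀ _ hpk'.ne'] at this
  have ha0 : a < 0 := ha₀.trans_lt (by linarith [div_pos (by linarith : (0 : ℝ) < 2 * k) hpk'])
  have hka : k * a < 0 := mul_neg_of_pos_of_neg hk' ha0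
  set θ := (p - k) * ε / 2
  have hθ : 0 < θ := by positivity
  have hθ2 : 2 * θ = (p - k) * ε := by simp only [θ]; ring
  refine ⟨_, hu.isBigO_rpow_of_sourceMass_isBigO hk (by omega) hlim
    (hu.sourceMass_isBigO_rpow (by omega) (by linarith) ha (q := n + p * a + θ) (by linarith)
      (by linarith)) (by linarith), ?_⟩
  have hδ : (p - k) * ε / (2 * k) * k = θ := by field_simp; linarith
  rw [div_le_iff₀ hk', sub_mul, hδ]
  linarith

end IsRegularSolution

theorem bigO_improvement_general (n k : ℕ) (p ρ ε : ℝ) (u : ℝ → ℝ)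
    (hk1 : 1 < k) (hk2 : 2 * k < n)
    (hp : (n : ℝ) * k / ((n : ℝ) - 2 * k) < p)
    (hu : IsRegularSolution n k p ρ u)
    (hε : ε ∈ Ioo 0 (((n : ℝ) - 2 * k) / k - 2 * (k : ℝ) / (p - k)))
    (hO : u =O[atTop] fun r : ℝ => r ^ (-(2 * (k : ℝ) / (p - k)) - ε)) :
    u =O[atTop] fun r : ℝ => r ^ ((2 * (k : ℝ) - n) / k) := by
  have hk : 0 < k := by omega
  have hkn : (2 * k : ℝ) < n := by exact_mod_cast hk2
  have hpk : (k : ℝ) < p := lt_of_le_of_lt (by rw [le_div_iff₀ (by linarith)]; nlinarith) hp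
  have hδ : 0 < (p - k) * ε / (2 * k) := by have := sub_pos.2 hpk; have := hε.1; positivity
  have hlim : Tendsto u atTop (𝓝 0) := hO.trans_tendsto <| by
    rw [← neg_add']
    exact tendsto_rpow_neg_atTop (by have := sub_pos.2 hpk; have := hε.1; positivity)
  obtain ⟨a, ha, hap⟩ := exists_mem_lt_of_forall_exists_le_sub
    (S := {a | u =O[atTop] fun r => r ^ a}) (b := -n / p) hδ hO fun a ha ha₀ hab =>
      hu.exists_isBigO_rpow_le_sub hk hk2 hpk hε.1 hlim ha ha₀
        (by rwa [div_le_iff₀ (by linarith), mul_comm] at hab)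
  exact hu.isBigO_fundamental_of_mul_lt_neg hk hk2 (by linarith) hlim ha
    (by rwa [lt_div_iff₀ (by linarith), mul_comm] at hap)

/-- if `u(r) = O(r^{-2k/(p-k)-ε})`, then `u(r) = O(r^{(2k-n)/k})`. -/
theorem bigO_improvement (n k : ℕ) (p ρ ε : ℝ) (u : ℝ → ℝ)
    (hn : 3 ≤ n) (hk1 : 1 < k) (hk2 : 2 * k < n) (hρ : 0 < ρ)
    (hp : (n : ℝ) * k / ((n : ℝ) - 2 * k) < p)
    (hu : IsRegularSolution n k p ρ u)
    (hε : ε ∈ Ioo 0 (((n : ℝ) - 2 * k) / k - 2 * (k : ℝ) / (p - k)))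
    (hO : u =O[atTop] fun r : ℝ => r ^ (-(2 * (k : ℝ) / (p - k)) - ε)) :
    u =O[atTop] fun r : ℝ => r ^ ((2 * (k : ℝ) - n) / k) :=
  bigO_improvement_general n k p ρ ε u hk1 hk2 hp hu hε hO

end KHessianPaper
end
end

section
/- Let n ≥ 3, k an integer with 1 < k < n/2, and p > nk/(n-2k). Then the function u_s(r) = A·r^{-2k/(p-k)}, where A = ((1/k)·C(n-1,k-1))^{1/(p-k)}·(2k/(p-k))^{k/(p-k)}·(n − 2pk/(p-k))^{1/(p-k)}, is positive on (0,∞), the flux w(r) := r^{n-k}|u_s'(r)|^{k-1}u_s'(r) is differentiable on (0,∞), and w'(r) = -(k/C(n-1,k-1))·r^{n-1}·u_s(r)^p for all r > 0. -/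
open MeasureTheory Real Set Filter Asymptotics

noncomputable section

namespace KHessianPaper

/-!
`u_s = A r^{-α}` with `α = 2k/(p-k)` is a pure power, so its flux is the pure power
`-(Aα)^k r^{n-(α+2)k}`, whose derivative is a multiple of `r^{n-(α+2)k-1}`. This is the power
`r^{n-1} r^{-αp}` of the right-hand side because `α(p-k) = 2k`, and the coefficients agree
because `A^{p-k} = (1/k) C(n-1,k-1) α^k (n-(α+2)k)`, which is how `A` is defined.
-/

theorem binomC_pos {n k : ℕ} (hkn : k ≤ n) : 0 < binomC n k := by
  unfold binomC
  exact_mod_cast Nat.choose_pos (by omega)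

section PowerProfile

variable {A α : ℝ}

theorem hasDerivAt_mul_rpow_neg {r : ℝ} (hr : 0 < r) :
    HasDerivAt (fun s : ℝ => A * s ^ (-α)) (-(A * α) * r ^ (-α - 1)) r :=
  ((Real.hasDerivAt_rpow_const (Or.inl hr.ne')).const_mul A).congr_deriv (by ring)

theorem flux_mul_rpow_neg {n k : ℕ} (hk : 1 ≤ k) (hkn : k ≤ n) (hAα : 0 ≤ A * α)
    {r : ℝ} (hr : 0 < r) :
    flux n k (fun s : ℝ => A * s ^ (-α)) r = -(A * α) ^ k * r ^ ((n : ℝ) - (α + 2) * k) := by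
  have hexp : ((n - k : ℕ) : ℝ) + (-α - 1) * ((k - 1 : ℕ) : ℝ) + (-α - 1)
      = (n : ℝ) - (α + 2) * k := by
    push_cast [Nat.cast_sub hkn, Nat.cast_sub hk]; ring
  have hpow : (A * α) ^ (k - 1) * (A * α) = (A * α) ^ k := by
    rw [← pow_succ, Nat.sub_add_cancel hk]
  rw [flux, (hasDerivAt_mul_rpow_neg hr).deriv, abs_mul, abs_neg, abs_of_nonneg hAα,
    abs_of_pos (Real.rpow_pos_of_pos hr _), mul_pow, ← hexp, Real.rpow_add hr,
    Real.rpow_add hr, Real.rpow_natCast, Real.rpow_mul hr.le, Real.rpow_natCast, ← hpow]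
  ring

theorem hasDerivAt_flux_mul_rpow_neg {n k : ℕ} (hk : 1 ≤ k) (hkn : k ≤ n) (hAα : 0 ≤ A * α)
    {r : ℝ} (hr : 0 < r) :
    HasDerivAt (flux n k (fun s : ℝ => A * s ^ (-α)))
      (-(A * α) ^ k * (((n : ℝ) - (α + 2) * k) * r ^ ((n : ℝ) - (α + 2) * k - 1))) r := by
  have hflux : flux n k (fun s : ℝ => A * s ^ (-α))
      =ᶠ[nhds r] fun s : ℝ => -(A * α) ^ k * s ^ ((n : ℝ) - (α + 2) * k) := by
    filter_upwards [Ioi_mem_nhds hr] with s hs using flux_mul_rpow_neg hk hkn hAα hs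
  exact ((Real.hasDerivAt_rpow_const (Or.inl hr.ne')).const_mul _).congr_of_eventuallyEq hflux

end PowerProfile

section SingularSolution

variable {n k : ℕ} {p : ℝ}

theorem natCast_lt_of_div_lt (hkn : 2 * k < n) (hp : (n : ℝ) * k / ((n : ℝ) - 2 * k) < p) :
    (k : ℝ) < p := by
  have hd : (0 : ℝ) < n - 2 * k := by
    rw [sub_pos]; exact_mod_cast hkn
  refine lt_of_le_of_lt ?_ hp
  rw [le_div_iff₀ hd]
  nlinarith [(Nat.cast_nonneg k : (0 : ℝ) ≤ k)]

theorem sub_div_pos_of_div_lt (hkn : 2 * k < n) (hp : (n : ℝ) * k / ((n : ℝ) - 2 * k) < p) :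
    0 < (n : ℝ) - 2 * p * k / (p - k) := by
  have hd : (0 : ℝ) < n - 2 * k := by
    rw [sub_pos]; exact_mod_cast hkn
  have hpk : (0 : ℝ) < p - k := sub_pos.mpr (natCast_lt_of_div_lt hkn hp)
  rw [div_lt_iff₀ hd] at hp
  rw [sub_pos, div_lt_iff₀ hpk]
  linarith

theorem Aconst_pos (hk : 0 < k) (hkn : k ≤ n) (hkp : (k : ℝ) < p)
    (hβ : 0 < (n : ℝ) - 2 * p * k / (p - k)) : 0 < Aconst n k p := by
  have hpk : (0 : ℝ) < p - k := sub_pos.mpr hkp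
  have hC := binomC_pos hkn
  unfold Aconst
  positivity

theorem Aconst_rpow_sub (hkp : (k : ℝ) < p) (hβ : 0 ≤ (n : ℝ) - 2 * p * k / (p - k)) :
    Aconst n k p ^ (p - k)
      = 1 / k * binomC n k * (2 * k / (p - k)) ^ k * ((n : ℝ) - 2 * p * k / (p - k)) := by
  have hpk : p - k ≠ 0 := (sub_pos.mpr hkp).ne'
  have hC : (0 : ℝ) ≤ 1 / k * binomC n k := by unfold binomC; positivity
  have hα : (0 : ℝ) ≤ 2 * k / (p - k) := div_nonneg (by positivity) (sub_pos.mpr hkp).le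
  rw [Aconst, Real.mul_rpow (by positivity) (by positivity), Real.mul_rpow (by positivity)
    (by positivity), ← Real.rpow_mul hC, ← Real.rpow_mul hα, ← Real.rpow_mul hβ,
    one_div_mul_cancel hpk, div_mul_cancel₀ _ hpk, Real.rpow_one, Real.rpow_one,
    Real.rpow_natCast]

theorem rhs_uSing_eq (hk : 0 < k) (hkn : k ≤ n) (hkp : (k : ℝ) < p)
    (hβ : 0 < (n : ℝ) - 2 * p * k / (p - k)) {r : ℝ} (hr : 0 < r) :
    -((k : ℝ) / binomC n k) * r ^ (n - 1) * uSing n k p r ^ p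
      = -(Aconst n k p * (2 * k / (p - k))) ^ k
        * (((n : ℝ) - (2 * k / (p - k) + 2) * k)
          * r ^ ((n : ℝ) - (2 * k / (p - k) + 2) * k - 1)) := by
  set A := Aconst n k p
  set α := 2 * (k : ℝ) / (p - k) with hα
  have hpk : p - k ≠ 0 := (sub_pos.mpr hkp).ne'
  have hA : 0 < A := Aconst_pos hk hkn hkp hβ
  have hC : binomC n k ≠ 0 := (binomC_pos hkn).ne'
  have hβα : (n : ℝ) - (α + 2) * k = n - 2 * p * k / (p - k) := by
    rw [hα]; field_simp; ring
  have hexp : (n : ℝ) - (α + 2) * k - 1 = ((n - 1 : ℕ) : ℝ) + -α * p := by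
    push_cast [Nat.cast_sub (by omega : 1 ≤ n)]
    rw [hα]; field_simp; ring
  have hAp : A ^ p = A ^ (p - k) * A ^ k := by
    rw [← Real.rpow_natCast, ← Real.rpow_add hA, sub_add_cancel]
  have hu : uSing n k p r = A * r ^ (-α) := rfl
  rw [hu, Real.mul_rpow hA.le (Real.rpow_nonneg hr.le _), ← Real.rpow_mul hr.le, hexp,
    Real.rpow_add hr, Real.rpow_natCast, hAp, Aconst_rpow_sub hkp hβ.le, hβα]
  field_simp
  ring

end SingularSolution

theorem singular_solution_solves_general (n k : ℕ) (p : ℝ)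
    (hk1 : 1 < k) (hk2 : 2 * k < n)
    (hp : (n : ℝ) * k / ((n : ℝ) - 2 * k) < p) :
    (∀ r : ℝ, 0 < r → 0 < uSing n k p r) ∧
    (∀ r : ℝ, 0 < r → HasDerivAt (flux n k (uSing n k p))
      (-((k : ℝ) / binomC n k) * r ^ (n - 1) * uSing n k p r ^ p) r) := by
  have hk : 0 < k := by omega
  have hkn : k ≤ n := by omega
  have hkp := natCast_lt_of_div_lt hk2 hp
  have hβ := sub_div_pos_of_div_lt hk2 hp
  have hA := Aconst_pos hk hkn hkp hβ
  have hα : 0 < 2 * (k : ℝ) / (p - k) := div_pos (by positivity) (sub_pos.mpr hkp)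
  refine ⟨fun r hr => mul_pos hA (Real.rpow_pos_of_pos hr _), fun r hr => ?_⟩
  rw [rhs_uSing_eq hk hkn hkp hβ hr]
  exact hasDerivAt_flux_mul_rpow_neg hk hkn (mul_pos hA hα).le hr

/-- the function `u_s(r) = A r^{-2k/(p-k)}` is positive on `(0,∞)` and
its flux satisfies the radial `k`-Hessian equation on `(0,∞)`. -/
theorem singular_solution_solves (n k : ℕ) (p : ℝ)
    (hn : 3 ≤ n) (hk1 : 1 < k) (hk2 : 2 * k < n)
    (hp : (n : ℝ) * k / ((n : ℝ) - 2 * k) < p) :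
    (∀ r : ℝ, 0 < r → 0 < uSing n k p r) ∧
    (∀ r : ℝ, 0 < r → HasDerivAt (flux n k (uSing n k p))
      (-((k : ℝ) / binomC n k) * r ^ (n - 1) * uSing n k p r ^ p) r) :=
  singular_solution_solves_general n k p hk1 hk2 hp

end KHessianPaper
end
end
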